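/- For every integer n ≥ 2 and every displacement u : H_n → ℝ², the induced elongation vector κ_u satisfies the hexagonal equation at every interior node of the hexagonal array of side n (necessity of the linearized compatibility conditions: im R ⊆ ker Z). -/

import Mathlib

open scoped Classical

/-- The hexagonal array of side `n`: nodes `(i,j) ∈ ℤ²` with `|i| ≤ n-1`, `|j| ≤ n-1`,
`|i+j| ≤ n-1`. -/
noncomputable def hexNodes (n : ℤ) : Finset (ℤ × ℤ) :=
  (Finset.Icc ((-(n-1), -(n-1)) : ℤ × ℤ) ((n-1, n-1) : ℤ × ℤ)).filter
    (fun p => |p.1 + p.2| ≤ n - 1)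

/-- The three lattice directions `(1,0)`, `(0,1)`, `(-1,1)`. -/
def hexDirs : Finset (ℤ × ℤ) := {(1,0), (0,1), (-1,1)}

/-- The edges of the hexagonal array of side `n`: unordered pairs `{p, p+d}` with both
endpoints in `hexNodes n` and `d` one of the three lattice directions. -/
noncomputable def hexEdges (n : ℤ) : Finset (Sym2 (ℤ × ℤ)) :=
  (((hexNodes n) ×ˢ hexDirs).filter (fun pd => pd.1 + pd.2 ∈ hexNodes n)).image
    (fun pd => s(pd.1, pd.1 + pd.2))

/-- Interior nodes: all six neighbors lie in the array. -/
noncomputable def interiorNodes (n : ℤ) : Finset (ℤ × ℤ) :=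
  (hexNodes n).filter (fun p => ∀ d ∈ hexDirs, p + d ∈ hexNodes n ∧ p - d ∈ hexNodes n)

/-- The hexagonal equation for `κ` at a node `p`: the sum of `κ` over the six spoke edges of
`p` equals the sum of `κ` over the six rim edges around `p`. -/
def hexEq (κ : Sym2 (ℤ × ℤ) → ℝ) (p : ℤ × ℤ) : Prop :=
  κ s(p, p + (1,0)) + κ s(p, p - (1,0)) + κ s(p, p + (0,1)) + κ s(p, p - (0,1)) +
    κ s(p, p + (-1,1)) + κ s(p, p - (-1,1)) =
  κ s(p + (1,0), p + (0,1)) + κ s(p + (0,1), p + (-1,1)) + κ s(p + (-1,1), p - (1,0)) +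
    κ s(p - (1,0), p - (0,1)) + κ s(p - (0,1), p + (1,-1)) + κ s(p + (1,-1), p + (1,0))

/-- Embedding of the lattice in the Euclidean plane: `e(i,j) = i·(1,0) + j·(1/2, √3/2)`,
so that every edge has unit length. -/
noncomputable def emb (p : ℤ × ℤ) : ℝ × ℝ :=
  ((p.1 : ℝ) + (p.2 : ℝ) / 2, (p.2 : ℝ) * (Real.sqrt 3 / 2))

/-- The Euclidean inner product on `ℝ²`. -/
def dot (a b : ℝ × ℝ) : ℝ := a.1 * b.1 + a.2 * b.2

/-- The elongation of the unordered pair `{p, q}` induced by a displacement `u`: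
`κ_u({p,q}) = (e(q) - e(p)) · (u(q) - u(p))`. -/
noncomputable def kap (u : ℤ × ℤ → ℝ × ℝ) : Sym2 (ℤ × ℤ) → ℝ :=
  Sym2.lift ⟨fun p q => dot (emb q - emb p) (u q - u p), fun p q => by
    simp only [dot, Prod.fst_sub, Prod.snd_sub]; ring⟩
/-! Write `a₁, …, a₆` for the offsets of the six neighbours of `e(p)`, in cyclic order. The
embedded neighbours form an affinely regular hexagon: `a_{k-1} + a_{k+1} = a_k`, hence also
`∑ a_k = 0`. In `spokes - rims` the coefficient of `u(p + d_k)` is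
`a_k - ((a_k - a_{k-1}) - (a_{k+1} - a_k)) = a_{k-1} + a_{k+1} - a_k = 0`, and that of `u(p)` is
`-∑ a_k = 0`. -/

theorem kap_mk (u : ℤ × ℤ → ℝ × ℝ) (p q : ℤ × ℤ) :
    kap u s(p, q) = dot (emb q - emb p) (u q - u p) :=
  rfl

theorem emb_add (p q : ℤ × ℤ) : emb (p + q) = emb p + emb q := by
  simp only [emb, Prod.fst_add, Prod.snd_add, Int.cast_add, Prod.mk_add_mk]
  ext <;> ring

theorem emb_add_eq_emb_add {a b c d : ℤ × ℤ} (h : a + b = c + d) :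
    emb a + emb b = emb c + emb d := by
  rw [← emb_add, ← emb_add, h]

theorem dot_spokes_eq_dot_rims {z₀ z₁ z₂ z₃ z₄ z₅ z₆ : ℝ × ℝ} (y₀ y₁ y₂ y₃ y₄ y₅ y₆ : ℝ × ℝ)
    (h₂ : z₁ + z₃ = z₀ + z₂) (h₃ : z₂ + z₄ = z₀ + z₃) (h₄ : z₃ + z₅ = z₀ + z₄)
    (h₅ : z₄ + z₆ = z₀ + z₅) :
    dot (z₁ - z₀) (y₁ - y₀) + dot (z₄ - z₀) (y₄ - y₀) + dot (z₂ - z₀) (y₂ - y₀) +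
        dot (z₅ - z₀) (y₅ - y₀) + dot (z₃ - z₀) (y₃ - y₀) + dot (z₆ - z₀) (y₆ - y₀) =
      dot (z₂ - z₁) (y₂ - y₁) + dot (z₃ - z₂) (y₃ - y₂) + dot (z₄ - z₃) (y₄ - y₃) +
        dot (z₅ - z₄) (y₅ - y₄) + dot (z₆ - z₅) (y₆ - y₅) + dot (z₁ - z₆) (y₁ - y₆) := by
  obtain rfl := eq_sub_of_add_eq' h₂
  obtain rfl := eq_sub_of_add_eq' h₃
  obtain rfl := eq_sub_of_add_eq' h₄
  obtain rfl := eq_sub_of_add_eq' h₅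
  simp only [dot, Prod.fst_sub, Prod.snd_sub, Prod.fst_add, Prod.snd_add]
  ring

theorem elongation_satisfies_hexEq_general (n : ℤ) (u : ℤ × ℤ → ℝ × ℝ) :
    ∀ p ∈ interiorNodes n, hexEq (kap u) p := by
  intro p _
  have h_opp : p - (-1, 1) = p + (1, -1) := by rw [sub_eq_add_neg, Prod.neg_mk, neg_neg]
  rw [hexEq, h_opp]
  simp only [kap_mk]
  apply dot_spokes_eq_dot_rims
  all_goals
    refine emb_add_eq_emb_add ?_
    ext <;> simp only [Prod.fst_add, Prod.snd_add, Prod.fst_sub, Prod.snd_sub] <;> ring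

/-- for `n ≥ 2`, the elongation vector `κ_u` induced by any displacement `u`
satisfies the hexagonal equation at every interior node of the hexagonal array of side `n`
(necessity of the linearized compatibility conditions: `im R ⊆ ker Z`). -/
theorem elongation_satisfies_hexEq (n : ℤ) (hn : 2 ≤ n) (u : ℤ × ℤ → ℝ × ℝ) :
    ∀ p ∈ interiorNodes n, hexEq (kap u) p :=
  elongation_satisfies_hexEq_general n u
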